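/- arXiv:2202.06795 — 2 statements merged into one kernel-verified Lean document; each statement's English description precedes it below -/
import Mathlib

section
/- Let E ∈ H satisfy K·E = −1, and suppose E = C + D_1 + ⋯ + D_d + P_1 + ⋯ + P_p, where every summand has virtual genus 0 (i.e., x·x + K·x = −2 for each summand x), C·C = −2, D_i·D_i = −1 for each i, and P_j·P_j ≥ 0 for each j. Then p = 0 and d = 1; that is, the decomposition has no components of nonnegative square and exactly one component of square −1. -/
open Finset Filter

/-- A homology class of the `n`-point blowup of the ruled surface `Σ_g × S²`,
written in coordinates `(a, b, d)` with respect to the basis `B, F, E₁, …, Eₙ`. -/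
abbrev HClass (n : ℕ) := ℤ × ℤ × (Fin n → ℤ)

/-- The intersection pairing determined by `B·B = 0`, `F·F = 0`, `B·F = 1`,
`Eᵢ·Eᵢ = −1`, all other pairings of distinct basis vectors being `0`. -/
def ipair {n : ℕ} (A A' : HClass n) : ℤ :=
  A.1 * A'.2.1 + A'.1 * A.2.1 - ∑ i, A.2.2 i * A'.2.2 i

/-- The canonical class `K = −2B + (2g−2)F + E₁ + ⋯ + Eₙ`. -/
def Kcl (n g : ℕ) : HClass n := (-2, 2 * (g : ℤ) - 2, fun _ => 1)

/-- The virtual genus `g_J(A) = (A·A + K·A)/2 + 1`. -/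
def gJ (n g : ℕ) (A : HClass n) : ℤ :=
  (ipair A A + ipair (Kcl n g) A) / 2 + 1

/-- The section-type class `B + kF − Σ_{i∈I} Eᵢ`. -/
def secClass (n : ℕ) (k : ℤ) (I : Finset (Fin n)) : HClass n :=
  (1, k, fun i => if i ∈ I then -1 else 0)

/-- The exceptional basis class `Eᵢ`. -/
def Ecl (n : ℕ) (i : Fin n) : HClass n :=
  (0, 0, fun j => if j = i then 1 else 0)

/-- The class `F − Eᵢ`. -/
def FEcl (n : ℕ) (i : Fin n) : HClass n :=
  (0, 1, fun j => if j = i then -1 else 0)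

/-- The fiber class `F`. -/
def Fcl (n : ℕ) : HClass n := (0, 1, fun _ => 0)


lemma ipair_add_right {n : ℕ} (A B C : HClass n) :
    ipair A (B + C) = ipair A B + ipair A C := by
  simp [ipair, Prod.fst_add, Prod.snd_add, Pi.add_apply, mul_add,
    Finset.sum_add_distrib]
  ring

lemma ipair_sum {n : ℕ} {ι : Type*} (A : HClass n) (s : Finset ι) (f : ι → HClass n) :
    ipair A (∑ i ∈ s, f i) = ∑ i ∈ s, ipair A (f i) := by
  classical
  induction s using Finset.cons_induction with
  | empty => simp [ipair]
  | cons a s h ih => rw [Finset.sum_cons, Finset.sum_cons, ipair_add_right, ih]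

/-- If `K.E = -1` and `E = C + D₁ + ⋯ + D_d + P₁ + ⋯ + P_p`, where every summand has
virtual genus `0` (i.e. `x.x + K.x = -2`), `C.C = -2`, `Dᵢ.Dᵢ = -1` for each `i`, and
`Pⱼ.Pⱼ ≥ 0` for each `j`, then `p = 0` and `d = 1`. -/
theorem stmt5 (n g : ℕ) (hn : 1 ≤ n) (hg : 1 ≤ g) (d p : ℕ)
    (E C : HClass n) (D : Fin d → HClass n) (P : Fin p → HClass n)
    (hKE : ipair (Kcl n g) E = -1)
    (hsum : E = C + ∑ i, D i + ∑ j, P j)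
    (hgC : ipair C C + ipair (Kcl n g) C = -2)
    (hgD : ∀ i, ipair (D i) (D i) + ipair (Kcl n g) (D i) = -2)
    (hgP : ∀ j, ipair (P j) (P j) + ipair (Kcl n g) (P j) = -2)
    (hCC : ipair C C = -2)
    (hDD : ∀ i, ipair (D i) (D i) = -1)
    (hPP : ∀ j, 0 ≤ ipair (P j) (P j)) :
    p = 0 ∧ d = 1 := by
  have hKC : ipair (Kcl n g) C = 0 := by linarith
  have hKD : ∀ i, ipair (Kcl n g) (D i) = -1 := fun i => by
    have := hgD i; have := hDD i; linarith
  have hKP : ∀ j, ipair (Kcl n g) (P j) = -2 - ipair (P j) (P j) := fun j => by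
    have := hgP j; linarith
  rw [hsum, ipair_add_right, ipair_add_right, ipair_sum, ipair_sum] at hKE
  simp only [hKC, hKD, hKP, Finset.sum_const, Finset.card_univ, Fintype.card_fin,
    nsmul_eq_mul, mul_neg_one] at hKE
  have hsumge : (2 : ℤ) * p ≤ ∑ j, (2 + ipair (P j) (P j)) := by
    calc (2:ℤ) * p = ∑ _j : Fin p, (2:ℤ) := by
          simp [Finset.sum_const, mul_comm]
      _ ≤ _ := Finset.sum_le_sum fun j _ => by have := hPP j; linarith
  have hsum2 : ∑ j, ((-2 : ℤ) - ipair (P j) (P j)) = -∑ j, (2 + ipair (P j) (P j)) := by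
    rw [← Finset.sum_neg_distrib]; congr 1; ext j; ring
  rw [hsum2] at hKE
  have hp : p = 0 := by
    by_contra hp
    have : 1 ≤ p := Nat.one_le_iff_ne_zero.mpr hp
    have : (1:ℤ) ≤ p := by exact_mod_cast this
    linarith
  subst hp
  simp only [Finset.univ_eq_empty, Finset.sum_empty, neg_zero, add_zero] at hKE
  refine ⟨rfl, ?_⟩
  have : (d : ℤ) = 1 := by linarith
  exact_mod_cast this
end

section
/- Let C′ ∈ H and let q ≥ 1 be an integer such that the multiple class qC′ has virtual genus 0, i.e., q²(C′·C′) + q(K·C′) = −2, and such that C′·C′ ≤ −2. Then K·C′ ≥ 0; consequently the genus-0 index of the simple class C′, namely −2 − 2K·C′, is at most −2 (i.e., the index is negative, and the simple representative is of non-positive index). -/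
open Finset Filter

/-- If `q ≥ 1` and the multiple class `qC'` has virtual genus `0`, i.e.
`q²(C'.C') + q(K.C') = -2`, and `C'.C' ≤ -2`, then `K.C' ≥ 0`; consequently the
genus-`0` index `-2 - 2K.C'` of the simple class `C'` is at most `-2`. -/
theorem stmt9 (n g : ℕ) (hn : 1 ≤ n) (hg : 1 ≤ g) (C' : HClass n) (q : ℤ)
    (hq : 1 ≤ q)
    (hgenus : q ^ 2 * ipair C' C' + q * ipair (Kcl n g) C' = -2)
    (hneg : ipair C' C' ≤ -2) :
    0 ≤ ipair (Kcl n g) C' ∧ -2 - 2 * ipair (Kcl n g) C' ≤ -2 := by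
  have h : 0 ≤ ipair (Kcl n g) C' := by nlinarith [sq_nonneg q, sq_nonneg (q-1)]
  exact ⟨h, by linarith⟩
end
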